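/- arXiv:2301.11388 — 3 statements merged into one kernel-verified Lean document; each statement's English description precedes it below -/
import Mathlib

section
/- Let V : ℝ → ℂ, let ζ₀ ∈ ℂ with ζ₀ ≠ 0, and let θ : [0,∞) × ℂ → ℂ be such that for every ζ in a neighbourhood of ζ₀ the function x ↦ θ(x,ζ) is twice differentiable and satisfies −∂ₓ²θ(x,ζ) + V(x)·θ(x,ζ) = ζ²·θ(x,ζ) for all x ≥ 0. Let G : [0,∞) → ℂ be twice differentiable with −G''(x) + V(x)·G(x) = ζ₀²·G(x) + 2ζ₀·θ(x,ζ₀), and assume the boundary maps ζ ↦ θ(0,ζ) and ζ ↦ ∂ₓθ(0,ζ) are differentiable at ζ₀ with derivatives G(0) and G'(0) respectively. Assume θ(0,ζ₀) ≠ 0, that ∂ₓθ(x,ζ₀)·G(x) − θ(x,ζ₀)·G'(x) → 0 as x → ∞, and that x ↦ θ(x,ζ₀)² is integrable on [0,∞). Then ∫₀^∞ θ(x,ζ₀)² dx = (θ(0,ζ₀)² / (2ζ₀)) · (d/dζ)|_{ζ=ζ₀} [ ∂ₓθ(0,ζ) / θ(0,ζ) ]. -/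
/-!
The modified Wronskian `W = θₓ(·,ζ₀) G - θ(·,ζ₀) G'` of the solution `θ(·,ζ₀)` and of its
ζ-derivative `G` satisfies `W' = 2ζ₀ θ(·,ζ₀)²`, because the two equations differ only by the
source term `2ζ₀ θ(·,ζ₀)`. Since `W → 0` at infinity, `2ζ₀ ∫₀^∞ θ² = -W(0)`, and `-W(0)/θ(0,ζ₀)²`
is exactly the quotient-rule derivative of `θₓ(0,ζ)/θ(0,ζ)` at `ζ₀`.
-/

open Complex MeasureTheory Filter Set

theorem hasDerivAt_wronskian_of_inhomogeneous {𝕜 𝔸 : Type*} [NontriviallyNormedField 𝕜]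
    [NormedCommRing 𝔸] [NormedAlgebra 𝕜 𝔸] {u u' w w' : 𝕜 → 𝔸} {x : 𝕜} {a b v lam c : 𝔸}
    (hu : HasDerivAt u (u' x) x) (hu' : HasDerivAt u' a x)
    (hw : HasDerivAt w (w' x) x) (hw' : HasDerivAt w' b x)
    (hua : -a + v * u x = lam * u x) (hwb : -b + v * w x = lam * w x + c) :
    HasDerivAt (fun y => u' y * w y - u y * w' y) (c * u x) x :=
  ((hu'.mul hw).sub (hu.mul hw')).congr_deriv (by linear_combination u x * hwb - w x * hua)

/-- If `θ(·,ζ)` is a family of solutions of `-u'' + V u = ζ² u` on `[0,∞)` for `ζ` near `ζ₀`,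
`G` is the ζ-derivative of `θ` at `ζ₀` (satisfying the ζ-differentiated equation and matching
the ζ-derivatives of the boundary data), `θ(0,ζ₀) ≠ 0`, the modified Wronskian vanishes at
infinity and `θ(·,ζ₀)²` is integrable, then
`∫₀^∞ θ(x,ζ₀)² dx = (θ(0,ζ₀)²/(2ζ₀)) · (d/dζ)[θₓ(0,ζ)/θ(0,ζ)]|_{ζ=ζ₀}`. -/
theorem stmt_2 (V : ℝ → ℂ) (ζ₀ : ℂ) (hζ₀ : ζ₀ ≠ 0)
    (θ θx θxx : ℝ → ℂ → ℂ) (G G' G'' : ℝ → ℂ) (U : Set ℂ)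
    (hU : U ∈ nhds ζ₀)
    (hθ : ∀ ζ ∈ U, ∀ x : ℝ, 0 ≤ x → HasDerivAt (fun y => θ y ζ) (θx x ζ) x)
    (hθx : ∀ ζ ∈ U, ∀ x : ℝ, 0 ≤ x → HasDerivAt (fun y => θx y ζ) (θxx x ζ) x)
    (heqθ : ∀ ζ ∈ U, ∀ x : ℝ, 0 ≤ x → -θxx x ζ + V x * θ x ζ = ζ ^ 2 * θ x ζ)
    (hG : ∀ x : ℝ, 0 ≤ x → HasDerivAt G (G' x) x)
    (hG' : ∀ x : ℝ, 0 ≤ x → HasDerivAt G' (G'' x) x)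
    (heqG : ∀ x : ℝ, 0 ≤ x →
      -G'' x + V x * G x = ζ₀ ^ 2 * G x + 2 * ζ₀ * θ x ζ₀)
    (hbd0 : HasDerivAt (fun ζ => θ 0 ζ) (G 0) ζ₀)
    (hbd1 : HasDerivAt (fun ζ => θx 0 ζ) (G' 0) ζ₀)
    (hθ0 : θ 0 ζ₀ ≠ 0)
    (hlim : Tendsto (fun x : ℝ => θx x ζ₀ * G x - θ x ζ₀ * G' x) atTop (nhds 0))
    (hint : IntegrableOn (fun x : ℝ => θ x ζ₀ ^ 2) (Set.Ici 0)) :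
    ∫ x in Set.Ioi (0 : ℝ), θ x ζ₀ ^ 2 =
      θ 0 ζ₀ ^ 2 / (2 * ζ₀) * deriv (fun ζ => θx 0 ζ / θ 0 ζ) ζ₀ := by
  have hζ₀U : ζ₀ ∈ U := mem_of_mem_nhds hU
  have hW : ∀ x ∈ Ici (0 : ℝ), HasDerivAt (fun y => θx y ζ₀ * G y - θ y ζ₀ * G' y)
      (2 * ζ₀ * θ x ζ₀ ^ 2) x := fun x hx =>
    (hasDerivAt_wronskian_of_inhomogeneous (hθ ζ₀ hζ₀U x hx) (hθx ζ₀ hζ₀U x hx) (hG x hx)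
      (hG' x hx) (heqθ ζ₀ hζ₀U x hx) (heqG x hx)).congr_deriv (by ring)
  have hW_integral : 2 * ζ₀ * ∫ x in Ioi (0 : ℝ), θ x ζ₀ ^ 2 =
      0 - (θx 0 ζ₀ * G 0 - θ 0 ζ₀ * G' 0) := by
    rw [← integral_const_mul]
    exact integral_Ioi_of_hasDerivAt_of_tendsto' hW
      ((hint.mono_set Ioi_subset_Ici_self).const_mul _) hlim
  have hratio : HasDerivAt (fun ζ => θx 0 ζ / θ 0 ζ)
      ((G' 0 * θ 0 ζ₀ - θx 0 ζ₀ * G 0) / θ 0 ζ₀ ^ 2) ζ₀ := hbd1.div hbd0 hθ0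
  rw [hratio.deriv]
  field_simp
  linear_combination hW_integral
end

section
/- Let a, b, c, d, φ ∈ ℝ with ad − bc = −1, and let w₁, w₂, p₁, p₂ ∈ ℂ with w₁ ≠ 0 and w₂ ≠ 0. Set L := a·p₁/w₁ − d·p₂/w₂ + b·p₁p₂/(w₁w₂) − c and assume L ≠ 0. Then the system of four linear equations in the unknowns λ₁₁, λ₁₂, λ₂₁, λ₂₂ ∈ ℂ: (i) w₁·λ₁₂ = e^{iφ}·(a·w₂·λ₂₂ + b·(1/w₂ + p₂·λ₂₂)); (ii) w₁·λ₁₁ = e^{iφ}·(a·w₂ + b·p₂)·λ₂₁; (iii) p₁·λ₁₂ = e^{iφ}·(c·w₂·λ₂₂ + d·(1/w₂ + p₂·λ₂₂)); (iv) 1/w₁ + p₁·λ₁₁ = e^{iφ}·(c·w₂ + d·p₂)·λ₂₁; has a unique solution, namely λ₁₁ = −(a + b·p₂/w₂)/(L·w₁²), λ₁₂ = −e^{iφ}/(L·w₁·w₂), λ₂₁ = −e^{−iφ}/(L·w₁·w₂), λ₂₂ = −(b·p₁/w₁ − d)/(L·w₂²). -/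
/-!
Both pairs `(λ₁₁, λ₂₁)` (equations (ii), (iv)) and `(λ₁₂, λ₂₂)` (equations (i), (iii)) solve a
2 × 2 linear system with the same coefficient matrix, whose determinant is `e^{iφ} L w₁ w₂ ≠ 0`.
So the system has at most one solution, and the stated values are checked to solve it.
-/

open Complex

section

variable {K : Type*} [Field K]

theorem eq_and_eq_of_det_ne_zero {a b c d x y x' y' : K} (hdet : a * d - b * c ≠ 0)
    (h₁ : a * x + b * y = a * x' + b * y') (h₂ : c * x + d * y = c * x' + d * y') :
    x = x' ∧ y = y' :=
  ⟨mul_left_cancel₀ hdet (by linear_combination d * h₁ - b * h₂),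
    mul_left_cancel₀ hdet (by linear_combination a * h₂ - c * h₁)⟩

/-- The interaction conditions imposed on the Kreĭn-formula ansatz, with `E = e^{iφ}`. -/
def KreinEquations (a b c d E w₁ w₂ p₁ p₂ l₁₁ l₁₂ l₂₁ l₂₂ : K) : Prop :=
  w₁ * l₁₂ = E * (a * w₂ * l₂₂ + b * (1 / w₂ + p₂ * l₂₂)) ∧
    w₁ * l₁₁ = E * (a * w₂ + b * p₂) * l₂₁ ∧
    p₁ * l₁₂ = E * (c * w₂ * l₂₂ + d * (1 / w₂ + p₂ * l₂₂)) ∧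
    1 / w₁ + p₁ * l₁₁ = E * (c * w₂ + d * p₂) * l₂₁

variable {a b c d E w₁ w₂ p₁ p₂ L : K}

theorem mul_mul_eq_of_eq_characteristic (hw₁ : w₁ ≠ 0) (hw₂ : w₂ ≠ 0)
    (hL : L = a * p₁ / w₁ - d * p₂ / w₂ + b * p₁ * p₂ / (w₁ * w₂) - c) :
    L * w₁ * w₂ = a * p₁ * w₂ - d * p₂ * w₁ + b * p₁ * p₂ - c * w₁ * w₂ := by
  rw [hL]
  field_simp

theorem KreinEquations.unique (hE : E ≠ 0) (hw₁ : w₁ ≠ 0) (hw₂ : w₂ ≠ 0) (hLne : L ≠ 0)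
    (hL : L * w₁ * w₂ = a * p₁ * w₂ - d * p₂ * w₁ + b * p₁ * p₂ - c * w₁ * w₂)
    {l₁₁ l₁₂ l₂₁ l₂₂ l₁₁' l₁₂' l₂₁' l₂₂' : K}
    (h : KreinEquations a b c d E w₁ w₂ p₁ p₂ l₁₁ l₁₂ l₂₁ l₂₂)
    (h' : KreinEquations a b c d E w₁ w₂ p₁ p₂ l₁₁' l₁₂' l₂₁' l₂₂') :
    l₁₁ = l₁₁' ∧ l₁₂ = l₁₂' ∧ l₂₁ = l₂₁' ∧ l₂₂ = l₂₂' := by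
  obtain ⟨h₁, h₂, h₃, h₄⟩ := h
  obtain ⟨h₁', h₂', h₃', h₄'⟩ := h'
  have hΔ : w₁ * -(E * (c * w₂ + d * p₂)) - -(E * (a * w₂ + b * p₂)) * p₁
      = E * (L * w₁ * w₂) := by
    linear_combination -E * hL
  have hdet : w₁ * -(E * (c * w₂ + d * p₂)) - -(E * (a * w₂ + b * p₂)) * p₁ ≠ 0 :=
    hΔ ▸ mul_ne_zero hE (mul_ne_zero (mul_ne_zero hLne hw₁) hw₂)
  obtain ⟨e₁₁, e₂₁⟩ := eq_and_eq_of_det_ne_zero (x := l₁₁) (y := l₂₁) (x' := l₁₁') (y' := l₂₁')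
    hdet (by linear_combination h₂ - h₂') (by linear_combination h₄ - h₄')
  obtain ⟨e₁₂, e₂₂⟩ := eq_and_eq_of_det_ne_zero (x := l₁₂) (y := l₂₂) (x' := l₁₂') (y' := l₂₂')
    hdet (by linear_combination h₁ - h₁') (by linear_combination h₃ - h₃')
  exact ⟨e₁₁, e₁₂, e₂₁, e₂₂⟩

theorem kreinEquations_explicit (hE : E ≠ 0) (hw₁ : w₁ ≠ 0) (hw₂ : w₂ ≠ 0) (hLne : L ≠ 0)
    (hL : L * w₁ * w₂ = a * p₁ * w₂ - d * p₂ * w₁ + b * p₁ * p₂ - c * w₁ * w₂)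
    (hdet : a * d - b * c = -1) :
    KreinEquations a b c d E w₁ w₂ p₁ p₂ (-(a + b * p₂ / w₂) / (L * w₁ ^ 2))
      (-E / (L * w₁ * w₂)) (-E⁻¹ / (L * w₁ * w₂)) (-(b * p₁ / w₁ - d) / (L * w₂ ^ 2)) := by
  refine ⟨?_, ?_, ?_, ?_⟩ <;> field_simp
  · linear_combination (-b) * hL - w₁ * w₂ * hdet
  · linear_combination (-d) * hL - p₁ * w₂ * hdet
  · linear_combination hL

end

/-- The algebraic core of the Kreĭn resolvent formula: the four linear equations coming
from the generalized point interaction conditions determine the coefficients `λ_{j,l}`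
uniquely, with the stated explicit values. -/
theorem stmt_4 (a b c d φ : ℝ) (hdet : a * d - b * c = -1)
    (w₁ w₂ p₁ p₂ : ℂ) (hw₁ : w₁ ≠ 0) (hw₂ : w₂ ≠ 0)
    (L : ℂ)
    (hL : L = (a : ℂ) * p₁ / w₁ - (d : ℂ) * p₂ / w₂ + (b : ℂ) * p₁ * p₂ / (w₁ * w₂) - c)
    (hLne : L ≠ 0) :
    ∀ l₁₁ l₁₂ l₂₁ l₂₂ : ℂ,
      (w₁ * l₁₂ = Complex.exp (φ * I) * ((a : ℂ) * w₂ * l₂₂ + (b : ℂ) * (1 / w₂ + p₂ * l₂₂)) ∧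
       w₁ * l₁₁ = Complex.exp (φ * I) * ((a : ℂ) * w₂ + (b : ℂ) * p₂) * l₂₁ ∧
       p₁ * l₁₂ = Complex.exp (φ * I) * ((c : ℂ) * w₂ * l₂₂ + (d : ℂ) * (1 / w₂ + p₂ * l₂₂)) ∧
       1 / w₁ + p₁ * l₁₁ = Complex.exp (φ * I) * ((c : ℂ) * w₂ + (d : ℂ) * p₂) * l₂₁)
      ↔
      (l₁₁ = -((a : ℂ) + (b : ℂ) * p₂ / w₂) / (L * w₁ ^ 2) ∧
       l₁₂ = -Complex.exp (φ * I) / (L * w₁ * w₂) ∧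
       l₂₁ = -Complex.exp (-(φ : ℂ) * I) / (L * w₁ * w₂) ∧
       l₂₂ = -((b : ℂ) * p₁ / w₁ - d) / (L * w₂ ^ 2)) := by
  intro l₁₁ l₁₂ l₂₁ l₂₂
  have hL' := mul_mul_eq_of_eq_characteristic hw₁ hw₂ hL
  have hsol := kreinEquations_explicit (exp_ne_zero (φ * I)) hw₁ hw₂ hLne hL' (by exact_mod_cast hdet)
  rw [neg_mul, exp_neg]
  constructor
  · exact fun h ↦ KreinEquations.unique (exp_ne_zero _) hw₁ hw₂ hLne hL' h hsol
  · rintro ⟨rfl, rfl, rfl, rfl⟩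
    exact hsol
end

section
/- Let H be a complex inner product space and let f, h ∈ H, and set g = f + h. Then (‖f‖² + ‖g‖²)² − 4·|⟨f, g⟩|² ≤ 6·‖h‖²·‖f‖² + 3·‖h‖⁴. -/
/-!
Write `t = ⟪f, h⟫`. The left-hand side equals `(‖g‖² - ‖f‖²)² + 4 (‖f‖²‖g‖² - |⟪f, g⟫|²)`, and the
Gram determinant in the second term does not change when `g = f + h` is replaced by `h`. Since
`‖g‖² - ‖f‖² = 2 re t + ‖h‖²` and `|t|² ≥ (re t)²`, the squares of `re t` cancel and the left-hand side
is at most `4‖h‖²‖f‖² + 4‖h‖² re t + ‖h‖⁴`. Cauchy–Schwarz and `2‖f‖‖h‖ ≤ ‖f‖² + ‖h‖²` bound the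
middle term by `2‖h‖²‖f‖² + 2‖h‖⁴`.
-/

section

open RCLike

variable {𝕜 E : Type*} [RCLike 𝕜] [NormedAddCommGroup E] [InnerProductSpace 𝕜 E]

local notation "⟪" x ", " y "⟫" => inner 𝕜 x y

theorem norm_sq_mul_norm_add_sq_sub_norm_inner_sq (f h : E) :
    ‖f‖ ^ 2 * ‖f + h‖ ^ 2 - ‖⟪f, f + h⟫‖ ^ 2 = ‖f‖ ^ 2 * ‖h‖ ^ 2 - ‖⟪f, h⟫‖ ^ 2 := by
  have hinner : ⟪f, f + h⟫ = ((‖f‖ ^ 2 : ℝ) : 𝕜) + ⟪f, h⟫ := by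
    rw [inner_add_right, inner_self_eq_norm_sq_to_K, ofReal_pow]
  rw [hinner, norm_add_sq (𝕜 := 𝕜), norm_sq_eq_def, norm_sq_eq_def, map_add, map_add, ofReal_re,
    ofReal_im]
  ring

end

open Complex

/-- If `g = f + h`, then `(‖f‖² + ‖g‖²)² − 4|⟨f,g⟩|² ≤ 6‖h‖²‖f‖² + 3‖h‖⁴`. -/
theorem stmt_5 {H : Type*} [NormedAddCommGroup H] [InnerProductSpace ℂ H]
    (f h g : H) (hg : g = f + h) :
    (‖f‖ ^ 2 + ‖g‖ ^ 2) ^ 2 - 4 * ‖(inner ℂ f g : ℂ)‖ ^ 2 ≤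
      6 * ‖h‖ ^ 2 * ‖f‖ ^ 2 + 3 * ‖h‖ ^ 4 := by
  subst hg
  have hgram := norm_sq_mul_norm_add_sq_sub_norm_inner_sq (𝕜 := ℂ) f h
  have hnorm := norm_add_sq (𝕜 := ℂ) f h
  have hre_sq : RCLike.re (inner ℂ f h) ^ 2 ≤ ‖(inner ℂ f h : ℂ)‖ ^ 2 := by
    simpa only [sq_abs] using
      pow_le_pow_left₀ (abs_nonneg _) (RCLike.abs_re_le_norm (inner ℂ f h)) 2
  have hcs := re_inner_le_norm (𝕜 := ℂ) f h
  nlinarith [mul_le_mul_of_nonneg_left hcs (sq_nonneg ‖h‖),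
    mul_nonneg (sq_nonneg ‖h‖) (sq_nonneg (‖f‖ - ‖h‖))]
end
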